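/- arXiv:2511.04907 — 2 statements merged into one kernel-verified Lean document; each statement's English description precedes it below -/
import Mathlib

section
/- Let a, b ∈ [−1,1] with a·b ≤ 0 and |a|+|b| > 0, and let V₁, V₂ ∈ ℝ with |V₁ − V₂| ≤ ρ/T for some ρ, T > 0. Define weights w₁ = |b|/(|a|+|b|) and w₂ = |a|/(|a|+|b|). Then w₁·a·V₁ + w₂·b·V₂ ≤ (|a|·|b|/(|a|+|b|)) · |V₁ − V₂| ≤ ρ/T. -/
theorem stmt_8 (a b V₁ V₂ ρ T : ℝ) (hab : a * b ≤ 0) (hρ : 0 < ρ) (hT : 0 < T)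
    (hV : |V₁ - V₂| ≤ ρ / T) (hpos : 0 < |a| + |b|)
    (ha : a ∈ Set.Icc (-1 : ℝ) 1) (hb : b ∈ Set.Icc (-1 : ℝ) 1) :
    (|b| / (|a| + |b|)) * a * V₁ + (|a| / (|a| + |b|)) * b * V₂ ≤
      (|a| * |b| / (|a| + |b|)) * |V₁ - V₂| ∧
    (|a| * |b| / (|a| + |b|)) * |V₁ - V₂| ≤ ρ / T := by
  obtain ⟨ha1, ha2⟩ := ha
  obtain ⟨hb1, hb2⟩ := hb
  have habs : a * |b| = -(b * |a|) := by
    rcases abs_cases a with ⟨e1, _⟩ | ⟨e1, _⟩ <;>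
      rcases abs_cases b with ⟨e2, _⟩ | ⟨e2, _⟩ <;> nlinarith
  have h1 : a * |b| * (V₁ - V₂) ≤ |a| * |b| * |V₁ - V₂| := by
    calc a * |b| * (V₁ - V₂) ≤ |a * |b| * (V₁ - V₂)| := le_abs_self _
      _ = |a| * |b| * |V₁ - V₂| := by
          rw [abs_mul, abs_mul, abs_abs]
  have key : |b| * a * V₁ + |a| * b * V₂ ≤ |a| * |b| * |V₁ - V₂| := by
    have heq : |b| * a * V₁ + |a| * b * V₂ = a * |b| * (V₁ - V₂) := by
      linear_combination V₂ * habs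
    rw [heq]; exact h1
  constructor
  · calc (|b| / (|a| + |b|)) * a * V₁ + (|a| / (|a| + |b|)) * b * V₂
        = (|b| * a * V₁ + |a| * b * V₂) / (|a| + |b|) := by ring
      _ ≤ (|a| * |b| * |V₁ - V₂|) / (|a| + |b|) := by gcongr
      _ = (|a| * |b| / (|a| + |b|)) * |V₁ - V₂| := by ring
  · have h2 : |a| * |b| / (|a| + |b|) ≤ 1 := by
      rw [div_le_one hpos]
      have hA : |a| ≤ 1 := abs_le.mpr ⟨ha1, ha2⟩
      nlinarith [abs_nonneg a, abs_nonneg b]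
    calc (|a| * |b| / (|a| + |b|)) * |V₁ - V₂| ≤ 1 * |V₁ - V₂| :=
          mul_le_mul_of_nonneg_right h2 (abs_nonneg _)
      _ = |V₁ - V₂| := one_mul _
      _ ≤ ρ / T := hV
end

section
/- There does not exist, for each q ∈ [0,1], a function f_q : [0,1] × [0,1] → ℝ, a strictly monotone increasing bijection ζ : ℝ≥0 → ℝ≥0 with ζ(0) = 0, and an absolute constant C > 0, such that for every T ∈ ℕ, every q ∈ [0,1], and all sequences p₁,…,p_T and y₁,…,y_T in [0,1], the ℓ₂-quantile calibration error Σ_p n_p·(q − (1/n_p)·Σ_t 1[p_t = p, y_t ≤ p])² is at most ζ(sup over swap functions ν : [0,1]→[0,1] of Σ_t (f_q(p_t, y_t) − f_q(ν(p_t), y_t))) + C. -/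
/-!
Feed the forecaster a constant prediction `P` with constant outcome `y = 1` and take `q = 1/2`.
Whether or not `1 ≤ P`, every one of the `T` rounds is off by `1/2` in the empirical quantile,
so the calibration error is `T / 4`. The swap regret of any loss on such a sequence is
`T · (ℓ P - inf ℓ)`, which is at most `1` once `P` is a `1/T`-minimiser of `ℓ` on `[0, 1]`;
hence the right-hand side stays below `ζ 1 + C` while the left-hand side grows linearly in `T`.
-/

open scoped Classical

open Set

noncomputable def quantileCalibrationError {T : ℕ} (q : ℝ) (p y : Fin T → ℝ) : ℝ :=
  ∑ v ∈ Finset.image p Finset.univ,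
    (∑ t, if p t = v then (1 : ℝ) else 0) *
      (q - (1 / ∑ t, if p t = v then (1 : ℝ) else 0) *
        ∑ t, if p t = v ∧ y t ≤ v then (1 : ℝ) else 0) ^ 2

noncomputable def swapRegret {T : ℕ} (ℓ : ℝ → ℝ → ℝ) (p y : Fin T → ℝ) : ℝ :=
  sSup {s : ℝ | ∃ ν : ℝ → ℝ, MapsTo ν (Icc 0 1) (Icc 0 1) ∧
    s = ∑ t, (ℓ (p t) (y t) - ℓ (ν (p t)) (y t))}

theorem quantileCalibrationError_const (T : ℕ) (q P Y : ℝ) :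
    quantileCalibrationError q (fun _ : Fin T => P) (fun _ => Y) =
      T * (q - if Y ≤ P then 1 else 0) ^ 2 := by
  rcases Nat.eq_zero_or_pos T with rfl | hT
  · simp [quantileCalibrationError]
  have hT' : (T : ℝ) ≠ 0 := by positivity
  have : Nonempty (Fin T) := ⟨⟨0, hT⟩⟩
  unfold quantileCalibrationError
  rw [Finset.image_const Finset.univ_nonempty, Finset.sum_singleton]
  split_ifs <;> simp [*]

theorem swapRegret_const (ℓ : ℝ → ℝ → ℝ) (T : ℕ) {P : ℝ} (hP : P ∈ Icc 0 1) (Y : ℝ) :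
    swapRegret ℓ (fun _ : Fin T => P) (fun _ => Y) =
      sSup ((fun x => T * (ℓ P Y - ℓ x Y)) '' Icc 0 1) := by
  unfold swapRegret
  congr 1
  ext s
  simp only [Finset.sum_const, Finset.card_univ, Fintype.card_fin, nsmul_eq_mul, mem_ofPred_eq,
    mem_image]
  constructor
  · rintro ⟨ν, hν, rfl⟩
    exact ⟨ν P, hν hP, rfl⟩
  · rintro ⟨x, hx, rfl⟩
    exact ⟨fun _ => x, fun _ _ => hx, rfl⟩

theorem exists_sSup_mul_sub_image_mem_Icc (h : ℝ → ℝ) {c : ℝ} (hc : 0 < c) :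
    ∃ P ∈ Icc (0 : ℝ) 1, sSup ((fun x => c * (h P - h x)) '' Icc 0 1) ∈ Icc (0 : ℝ) 1 := by
  have nonneg (P) (hP : P ∈ Icc (0 : ℝ) 1) : 0 ≤ sSup ((fun x => c * (h P - h x)) '' Icc 0 1) :=
    Real.sSup_nonneg' ⟨0, ⟨P, hP, by simp⟩, le_rfl⟩
  by_cases hbdd : BddBelow (h '' Icc 0 1)
  · obtain ⟨_, ⟨P, hP, rfl⟩, hPmin⟩ := exists_lt_of_csInf_lt
      ((nonempty_Icc.2 zero_le_one).image h) (lt_add_of_pos_right _ (one_div_pos.2 hc))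
    refine ⟨P, hP, nonneg P hP, Real.sSup_le ?_ zero_le_one⟩
    rintro _ ⟨x, hx, rfl⟩
    have hPx : h P - h x ≤ 1 / c := by linarith [csInf_le hbdd (mem_image_of_mem h hx)]
    calc c * (h P - h x) ≤ c * (1 / c) := by gcongr
      _ = 1 := by field_simp
  -- Here the regret set is unbounded above, and `sSup` of such a set of reals is the junk value `0`.
  · refine ⟨0, left_mem_Icc.2 zero_le_one, nonneg 0 (left_mem_Icc.2 zero_le_one), ?_⟩
    suffices hunb : ¬ BddAbove ((fun x => c * (h 0 - h x)) '' Icc 0 1) by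
      rw [Real.sSup_of_not_bddAbove hunb]
      exact zero_le_one
    rintro ⟨M, hM⟩
    refine hbdd ⟨h 0 - M / c, ?_⟩
    rintro _ ⟨x, hx, rfl⟩
    have := hM (mem_image_of_mem _ hx)
    rw [sub_le_comm, le_div_iff₀ hc]
    linarith

theorem stmt_16 :
    ¬ ∃ (f : ℝ → ℝ → ℝ → ℝ) (ζ : ℝ → ℝ) (C : ℝ),
      StrictMonoOn ζ (Set.Ici 0) ∧ Set.BijOn ζ (Set.Ici 0) (Set.Ici 0) ∧ ζ 0 = 0 ∧ 0 < C ∧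
      ∀ (T : ℕ) (q : ℝ), q ∈ Set.Icc (0 : ℝ) 1 →
        ∀ (p y : Fin T → ℝ), (∀ t, p t ∈ Set.Icc (0 : ℝ) 1) →
          (∀ t, y t ∈ Set.Icc (0 : ℝ) 1) →
          (∑ v ∈ Finset.image p Finset.univ,
            (∑ t, if p t = v then (1 : ℝ) else 0) *
              (q - (1 / ∑ t, if p t = v then (1 : ℝ) else 0) *
                ∑ t, if p t = v ∧ y t ≤ v then (1 : ℝ) else 0) ^ 2)
          ≤ ζ (sSup {s : ℝ | ∃ ν : ℝ → ℝ,
                Set.MapsTo ν (Set.Icc 0 1) (Set.Icc 0 1) ∧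
                s = ∑ t, (f q (p t) (y t) - f q (ν (p t)) (y t))}) + C := by
  rintro ⟨f, ζ, C, hmono, -, -, -, hbound⟩
  obtain ⟨n, hn⟩ := exists_nat_gt (4 * (ζ 1 + C))
  obtain ⟨P, hP, hregret⟩ :=
    exists_sSup_mul_sub_image_mem_Icc (fun x => f (1 / 2) x 1) (Nat.cast_add_one_pos n)
  have hcalib : quantileCalibrationError (1 / 2) (fun _ : Fin (n + 1) => P) (fun _ => 1) ≤
      ζ (swapRegret (f (1 / 2)) (fun _ : Fin (n + 1) => P) (fun _ => 1)) + C :=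
    hbound (n + 1) (1 / 2) (by norm_num) _ _ (fun _ => hP) (fun _ => right_mem_Icc.2 zero_le_one)
  rw [quantileCalibrationError_const, swapRegret_const _ _ hP] at hcalib
  push_cast at hcalib hregret
  have hζ : ζ (sSup ((fun x => (n + 1) * (f (1 / 2) P 1 - f (1 / 2) x 1)) '' Icc 0 1)) ≤ ζ 1 :=
    hmono.monotoneOn hregret.1 (mem_Ici.2 zero_le_one) hregret.2
  split_ifs at hcalib <;> linarith
end
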